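/- Let [T1,T1'] and [T2,T2'] be Tamari intervals of size n with interval-posets P1 and P2. Then T1 ≥ T2 and T1' ≤ T2' (i.e., the interval [T1,T1'] is contained in the interval [T2,T2']) if and only if every relation of P2 is a relation of P1. -/

import Mathlib

/-- Planar binary trees: empty, or a node with a left and a right subtree. -/
inductive BinTree : Type where
  | leaf : BinTree
  | node : BinTree → BinTree → BinTree
  deriving DecidableEq

namespace BinTree

/-- Size: number of internal nodes. -/
def size : BinTree → ℕ
  | leaf => 0
  | node l r => l.size + r.size + 1

/-- `sub T o a b` : in the binary-search-tree labelling of `T` shifted by `o`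
(its labels are `o+1, …, o+T.size`), the node labelled `a` lies in the subtree
rooted at the node labelled `b`, i.e. `a ⊴_T b`. -/
def sub : BinTree → ℕ → ℕ → ℕ → Prop
  | leaf, _, _, _ => False
  | node l r, o, a, b =>
      (b = o + l.size + 1 ∧ o + 1 ≤ a ∧ a ≤ o + l.size + r.size + 1) ∨
      l.sub o a b ∨ r.sub (o + l.size + 1) a b

/-- One right rotation, applied at any position of the tree. -/
inductive Rot : BinTree → BinTree → Prop
  | base (A B C : BinTree) : Rot (node (node A B) C) (node A (node B C))
  | left {l l' : BinTree} (r : BinTree) : Rot l l' → Rot (node l r) (node l' r)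
  | right (l : BinTree) {r r' : BinTree} : Rot r r' → Rot (node l r) (node l r')

end BinTree

/-- Tamari order: reflexive-transitive closure of right rotation. -/
def tamariLE : BinTree → BinTree → Prop := Relation.ReflTransGen BinTree.Rot

/-- `incRel T a c` : `a` is below `c` in the initial forest `inc T`. -/
def incRel (T : BinTree) (a c : ℕ) : Prop := a < c ∧ T.sub 0 a c

/-- `decRel T c a` : `c` is below `a` in the final forest `dec T`. -/
def decRel (T : BinTree) (c a : ℕ) : Prop := a < c ∧ T.sub 0 c a

/-- The partial order on `{1, …, n}` generated by a family `r` of relations. -/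
def genClos (n : ℕ) (r : ℕ → ℕ → Prop) : ℕ → ℕ → Prop :=
  fun a b => (a = b ∧ 1 ≤ a ∧ a ≤ n) ∨ Relation.TransGen r a b

/-- The relation of the interval-poset `P_{[T1,T2]}` of a Tamari interval: the
partial order on `{1, …, n}` generated by the relations of `dec T1` together
with those of `inc T2`. -/
def pairRel (n : ℕ) (T1 T2 : BinTree) : ℕ → ℕ → Prop :=
  genClos n (fun x y => decRel T1 x y ∨ incRel T2 x y)

/-! Right rotations can only enlarge the final forest and shrink the initial forest. Conversely,
for trees of equal size, `dec S ⊆ dec T` forces `S ≤ T`: the root `k` of `T` is not below any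
smaller label of `S`, so it lies on the left branch of `S` and right rotations bring it to the
root, after which one recurses into the two subtrees; the statement for `inc` follows by mirror
symmetry. Every non-trivial relation of `P_{[T,T']}` holds in both `T` and `T'`, so `P₂ ⊆ P₁`
says exactly that `dec T₂ ⊆ dec T₁` and `inc T₂' ⊆ inc T₁'`. -/

namespace BinTree

theorem eq_leaf_of_size_eq_zero {T : BinTree} (h : T.size = 0) : T = leaf := by
  cases T with
  | leaf => rfl
  | node l r => simp [size] at h

theorem sub_bounds {T : BinTree} {o a b : ℕ} (h : T.sub o a b) :
    o + 1 ≤ a ∧ a ≤ o + T.size ∧ o + 1 ≤ b ∧ b ≤ o + T.size := by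
  induction T generalizing o with
  | leaf => exact h.elim
  | node l r ihl ihr =>
    simp only [size]
    rcases h with ⟨rfl, ha₁, ha₂⟩ | h | h
    · omega
    · have := ihl h; omega
    · have := ihr h; omega

theorem sub_trans {T : BinTree} {o a b c : ℕ} (hab : T.sub o a b) (hbc : T.sub o b c) :
    T.sub o a c := by
  induction T generalizing o with
  | leaf => exact hab.elim
  | node l r ihl ihr =>
    have hb := sub_bounds hab
    simp only [size] at hb
    rcases hbc with ⟨hc, -, -⟩ | hbc | hbc
    · exact Or.inl ⟨hc, by omega, by omega⟩
    · have := sub_bounds hbc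
      rcases hab with ⟨rfl, -, -⟩ | hab | hab
      · omega
      · exact Or.inr (Or.inl (ihl hab hbc))
      · have := sub_bounds hab; omega
    · have := sub_bounds hbc
      rcases hab with ⟨rfl, -, -⟩ | hab | hab
      · omega
      · have := sub_bounds hab; omega
      · exact Or.inr (Or.inr (ihr hab hbc))

theorem sub_node_left {l r : BinTree} {o a b : ℕ} (hb : b ≤ o + l.size)
    (h : (node l r).sub o a b) : l.sub o a b := by
  rcases h with ⟨rfl, -, -⟩ | h | h
  · omega
  · exact h
  · have := sub_bounds h; omega

theorem sub_node_right {l r : BinTree} {o a b : ℕ} (hb : o + l.size + 1 < b)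
    (h : (node l r).sub o a b) : r.sub (o + l.size + 1) a b := by
  rcases h with ⟨rfl, -, -⟩ | h | h
  · omega
  · have := sub_bounds h; omega
  · exact h

theorem not_sub_root_of_lt {l r : BinTree} {o m : ℕ} (hm : m < o + l.size + 1) :
    ¬ (node l r).sub o (o + l.size + 1) m := by
  rintro (⟨rfl, -, -⟩ | h | h)
  · omega
  · have := sub_bounds h; omega
  · have := sub_bounds h; omega

theorem Rot.size_eq {S T : BinTree} (h : Rot S T) : S.size = T.size := by
  induction h <;> simp only [size] at * <;> omega

theorem Rot.dec_mono {S T : BinTree} (h : Rot S T) {o a b : ℕ} (hba : b < a)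
    (hs : S.sub o a b) : T.sub o a b := by
  induction h generalizing o with
  | base A B C =>
    simp only [sub, size] at hs ⊢
    rcases hs with ⟨rfl, ha₁, ha₂⟩ | (⟨rfl, ha₁, ha₂⟩ | hs | hs) | hs
    · exact Or.inr (Or.inr (Or.inl ⟨by omega, by omega, by omega⟩))
    · exact Or.inl ⟨rfl, ha₁, by omega⟩
    · exact Or.inr (Or.inl hs)
    · exact Or.inr (Or.inr (Or.inr (Or.inl hs)))
    · exact Or.inr (Or.inr (Or.inr (Or.inr (by convert hs using 2; omega))))
  | left r h ih =>
    rcases hs with hroot | hs | hs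
    · exact Or.inl (h.size_eq ▸ hroot)
    · exact Or.inr (Or.inl (ih hs))
    · exact Or.inr (Or.inr (h.size_eq ▸ hs))
  | right l h ih =>
    rcases hs with hroot | hs | hs
    · exact Or.inl (h.size_eq ▸ hroot)
    · exact Or.inr (Or.inl hs)
    · exact Or.inr (Or.inr (ih hs))

def mirror : BinTree → BinTree
  | leaf => leaf
  | node l r => node r.mirror l.mirror

@[simp]
theorem size_mirror (T : BinTree) : T.mirror.size = T.size := by
  induction T with
  | leaf => rfl
  | node l r ihl ihr => simp only [mirror, size, ihl, ihr]; omega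

@[simp]
theorem mirror_mirror (T : BinTree) : T.mirror.mirror = T := by
  induction T with
  | leaf => rfl
  | node l r ihl ihr => simp only [mirror, ihl, ihr]

theorem sub_mirror_iff {T : BinTree} {o o' a a' b b' : ℕ}
    (ha : a + a' = o + o' + T.size + 1) (hb : b + b' = o + o' + T.size + 1) :
    T.mirror.sub o a b ↔ T.sub o' a' b' := by
  induction T generalizing o o' with
  | leaf => rfl
  | node l r ihl ihr =>
    simp only [size] at ha hb
    simp only [mirror, sub, size_mirror]
    rw [ihr (o := o) (o' := o' + l.size + 1) (by omega) (by omega),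
      ihl (o := o + r.size + 1) (o' := o') (by omega) (by omega),
      or_comm (a := r.sub _ _ _)]
    exact or_congr_left (by omega)

theorem Rot.mirror {S T : BinTree} (h : Rot S T) : Rot T.mirror S.mirror := by
  induction h with
  | base A B C => exact Rot.base _ _ _
  | left r _ ih => exact Rot.right _ ih
  | right l _ ih => exact Rot.left _ ih

theorem mirror_dec_subset_iff {S T : BinTree} (hsize : S.size = T.size) (o : ℕ) :
    (∀ a b, b < a → S.mirror.sub o a b → T.mirror.sub o a b) ↔
      ∀ a b, a < b → S.sub o a b → T.sub o a b := by
  set N := 2 * o + S.size + 1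
  constructor
  · intro H a b hab hs
    have := sub_bounds hs
    have hm := H (N - a) (N - b) (by omega) ((sub_mirror_iff (by omega) (by omega)).2 hs)
    exact (sub_mirror_iff (by omega) (by omega)).1 hm
  · intro H a b hba hs
    have := sub_bounds hs
    rw [size_mirror] at this
    have hm := (sub_mirror_iff (o' := o) (a' := N - a) (b' := N - b) (by omega) (by omega)).1 hs
    exact (sub_mirror_iff (by omega) (by omega)).2 (H _ _ (by omega) hm)

end BinTree

open BinTree

theorem tamariLE.size_eq {S T : BinTree} (h : tamariLE S T) : S.size = T.size := by
  induction h with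
  | refl => rfl
  | tail _ h ih => exact ih.trans h.size_eq

theorem tamariLE.dec_mono {S T : BinTree} (h : tamariLE S T) {o a b : ℕ} (hba : b < a)
    (hs : S.sub o a b) : T.sub o a b := by
  induction h with
  | refl => exact hs
  | tail _ h ih => exact h.dec_mono hba ih

theorem tamariLE.node_left {l l' : BinTree} (r : BinTree) (h : tamariLE l l') :
    tamariLE (node l r) (node l' r) :=
  Relation.ReflTransGen.lift (node · r) (fun _ _ => Rot.left r) _ _ h

theorem tamariLE.node_right (l : BinTree) {r r' : BinTree} (h : tamariLE r r') :
    tamariLE (node l r) (node l r') :=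
  Relation.ReflTransGen.lift (node l ·) (fun _ _ => Rot.right l) _ _ h

theorem tamariLE.mirror {S T : BinTree} (h : tamariLE S T) : tamariLE T.mirror S.mirror := by
  induction h with
  | refl => exact .refl
  | tail _ h ih => exact .head h.mirror ih

theorem tamariLE_mirror_iff {S T : BinTree} : tamariLE T.mirror S.mirror ↔ tamariLE S T :=
  ⟨fun h => by simpa using h.mirror, tamariLE.mirror⟩

/-- A label `k` that is not below any smaller label lies on the left branch of `S`, and right
rotations along that branch bring it to the root, creating only relations `a ⊴ k`. -/
theorem exists_tamariLE_node_root_eq {S : BinTree} {o k : ℕ} (hk₁ : o + 1 ≤ k)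
    (hk₂ : k ≤ o + S.size) (hk : ∀ m < k, ¬ S.sub o k m) :
    ∃ A B, tamariLE S (node A B) ∧ o + A.size + 1 = k ∧
      ∀ a b, (node A B).sub o a b → S.sub o a b ∨ b = k := by
  induction S with
  | leaf => simp only [size] at hk₂; omega
  | node L R ihL _ =>
    rcases lt_trichotomy k (o + L.size + 1) with hlt | rfl | hgt
    · obtain ⟨A, B, hL, hAk, hsub⟩ :=
        ihL (by omega) fun m hm hs => hk m hm (Or.inr (Or.inl hs))
      refine ⟨A, node B R, (hL.node_left R).tail (Rot.base A B R), hAk, ?_⟩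
      have hLsize := hL.size_eq
      simp only [size] at hLsize
      rintro a b (⟨rfl, -, -⟩ | hs | (⟨rfl, ha₁, ha₂⟩ | hs | hs))
      · exact Or.inr hAk
      · exact (hsub a b (Or.inr (Or.inl hs))).imp_left (Or.inr ∘ Or.inl)
      · exact Or.inl (Or.inl ⟨by omega, by omega, by omega⟩)
      · exact (hsub a b (Or.inr (Or.inr hs))).imp_left (Or.inr ∘ Or.inl)
      · exact Or.inl (Or.inr (Or.inr (by convert hs using 2; omega)))
    · exact ⟨L, R, .refl, rfl, fun a b hs => Or.inl hs⟩
    · simp only [size] at hk₂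
      exact absurd (Or.inl ⟨rfl, hk₁, by omega⟩) (hk _ hgt)

theorem tamariLE_of_dec_subset {S T : BinTree} {o : ℕ} (hsize : S.size = T.size)
    (H : ∀ a b, b < a → S.sub o a b → T.sub o a b) : tamariLE S T := by
  induction T generalizing S o with
  | leaf => rw [eq_leaf_of_size_eq_zero hsize]; exact .refl
  | node Lt Rt ihL ihR =>
    simp only [size] at hsize
    obtain ⟨A, B, hS, hA, hsub⟩ := exists_tamariLE_node_root_eq (S := S) (o := o)
      (k := o + Lt.size + 1) (by omega) (by omega)
      fun m hm hs => not_sub_root_of_lt hm (H _ _ hm hs)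
    have hB := hS.size_eq
    simp only [size] at hB
    have H' : ∀ a b, b < a → (node A B).sub o a b → (node Lt Rt).sub o a b := by
      intro a b hba hs
      have := sub_bounds hs
      simp only [size] at this
      exact (hsub a b hs).elim (H a b hba) fun hb => Or.inl ⟨hb, by omega, by omega⟩
    refine hS.trans ((tamariLE.node_left B (ihL (o := o) (by omega) fun a b hba hs => ?_)).trans
      (tamariLE.node_right Lt (ihR (o := o + Lt.size + 1) (by omega) fun a b hba hs => ?_)))
    · have := sub_bounds hs
      exact sub_node_left (by omega) (H' a b hba (Or.inr (Or.inl hs)))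
    · have := sub_bounds hs
      exact sub_node_right (by omega) (H' a b hba (Or.inr (Or.inr (by convert hs using 2))))

theorem tamariLE_iff_dec_subset {S T : BinTree} (hsize : S.size = T.size) (o : ℕ) :
    tamariLE S T ↔ ∀ a b, b < a → S.sub o a b → T.sub o a b :=
  ⟨fun h _ _ hba => h.dec_mono hba, tamariLE_of_dec_subset hsize⟩

theorem tamariLE_iff_inc_subset {S T : BinTree} (hsize : S.size = T.size) (o : ℕ) :
    tamariLE S T ↔ ∀ a b, a < b → T.sub o a b → S.sub o a b := by
  rw [← tamariLE_mirror_iff, tamariLE_iff_dec_subset (by simp [hsize]) o,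
    mirror_dec_subset_iff hsize.symm]

theorem tamariLE.inc_anti {S T : BinTree} (h : tamariLE S T) {o a b : ℕ} (hab : a < b)
    (hs : T.sub o a b) : S.sub o a b :=
  (tamariLE_iff_inc_subset h.size_eq o).1 h a b hab hs

theorem sub_of_pairRel {n : ℕ} {T T' : BinTree} (hI : tamariLE T T') {a b : ℕ} (hab : a ≠ b)
    (h : pairRel n T T' a b) : T.sub 0 a b ∧ T'.sub 0 a b := by
  have hgen : ∀ {x y}, decRel T x y ∨ incRel T' x y → T.sub 0 x y ∧ T'.sub 0 x y := by
    rintro x y (⟨hlt, hs⟩ | ⟨hlt, hs⟩)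
    · exact ⟨hs, hI.dec_mono hlt hs⟩
    · exact ⟨hI.inc_anti hlt hs, hs⟩
  rcases h with ⟨rfl, -⟩ | h
  · exact absurd rfl hab
  clear hab
  induction h with
  | single hr => exact hgen hr
  | tail _ hr ih => exact ⟨sub_trans ih.1 (hgen hr).1, sub_trans ih.2 (hgen hr).2⟩

theorem stmt4_general (n : ℕ) (T1 T1' T2 T2' : BinTree)
    (h1 : T1.size = n) (h1' : T1'.size = n) (h2 : T2.size = n) (h2' : T2'.size = n)
    (hI1 : tamariLE T1 T1') :
    (tamariLE T2 T1 ∧ tamariLE T1' T2') ↔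
      ∀ a b, pairRel n T2 T2' a b → pairRel n T1 T1' a b := by
  constructor
  · rintro ⟨hdec, hinc⟩ a b (hdiag | hchain)
    · exact Or.inl hdiag
    refine Or.inr (Relation.TransGen.mono ?_ _ _ hchain)
    rintro x y (⟨hlt, hs⟩ | ⟨hlt, hs⟩)
    · exact Or.inl ⟨hlt, hdec.dec_mono hlt hs⟩
    · exact Or.inr ⟨hlt, hinc.inc_anti hlt hs⟩
  · intro H
    have hgen : ∀ {x y}, decRel T2 x y ∨ incRel T2' x y → T1.sub 0 x y ∧ T1'.sub 0 x y :=
      fun hr => sub_of_pairRel hI1 (hr.elim (fun h => h.1.ne') (fun h => h.1.ne))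
        (H _ _ (Or.inr (.single hr)))
    exact ⟨(tamariLE_iff_dec_subset (h2.trans h1.symm) 0).2 fun a b hba hs =>
        (hgen (Or.inl ⟨hba, hs⟩)).1,
      (tamariLE_iff_inc_subset (h1'.trans h2'.symm) 0).2 fun a b hab hs =>
        (hgen (Or.inr ⟨hab, hs⟩)).2⟩

/-- `[T1,T1'] ⊆ [T2,T2']` iff every relation of `P_{[T2,T2']}` is a relation
of `P_{[T1,T1']}`. -/
theorem stmt4 (n : ℕ) (T1 T1' T2 T2' : BinTree)
    (h1 : T1.size = n) (h1' : T1'.size = n) (h2 : T2.size = n) (h2' : T2'.size = n)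
    (hI1 : tamariLE T1 T1') (hI2 : tamariLE T2 T2') :
    (tamariLE T2 T1 ∧ tamariLE T1' T2') ↔
      ∀ a b, pairRel n T2 T2' a b → pairRel n T1 T1' a b :=
  stmt4_general n T1 T1' T2 T2' h1 h1' h2 h2' hI1
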